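/- For all natural numbers n, the sum over k from 0 to n of C(n+k,k) * C(2n-k, n) * (1 + (n - 2k)*(H_k - H_{n+k})) equals C(2n+1, n). -/

import Mathlib

/-!
Wilf–Zeilberger telescoping. With `G n k = C(n+k,k) C(2n-k,n) (k - 2n - 1 + k(2n+1-k)(H_k - H_{n+k})) / (n+1)`,
the `k`-th summand equals `G n (k+1) - G n k`; the ratios of consecutive binomials are rational in `n`, `k`
and the harmonic increments are `1/(k+1)` and `1/(n+k+1)`, so this is an identity of rational functions.
The sum therefore telescopes to `G n (n+1) - G n 0`, where `G n (n+1) = 0` because `C(n-1,n) = 0`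
and `-G n 0 = (2n+1) C(2n,n) / (n+1) = C(2n+1,n)`.
-/

open Finset

def harmonicQ (m : Nat) : ℚ := ∑ j ∈ Finset.range m, (1 : ℚ) / (j + 1)

lemma harmonicQ_succ (m : ℕ) : harmonicQ (m + 1) = harmonicQ m + 1 / (m + 1) := by
  simp [harmonicQ, sum_range_succ]

section CastChoose

variable {K : Type*} [Field K] [CharZero K]

lemma cast_choose_succ_succ_eq (n k : ℕ) :
    ((n + k + 1).choose (k + 1) : K) = (n + k).choose k * (n + k + 1) / (k + 1) := by
  rw [eq_div_iff (Nat.cast_add_one_ne_zero k)]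
  exact_mod_cast (Nat.add_one_mul_choose_eq (n + k) k).symm.trans (mul_comm _ _)

lemma cast_choose_sub_one_eq {n m : ℕ} (h : n < m) :
    ((m - 1).choose n : K) = m.choose n * (m - n) / m := by
  obtain ⟨m, rfl⟩ := Nat.exists_eq_add_one_of_ne_zero (show m ≠ 0 by omega)
  rw [eq_div_iff (Nat.cast_ne_zero.mpr m.succ_ne_zero), Nat.add_sub_cancel, ← Nat.cast_sub h.le]
  exact_mod_cast Nat.choose_mul_succ_eq m n

end CastChoose

def wzCert (n k : ℕ) : ℚ :=
  ((n + k).choose k : ℚ) * ((2 * n - k).choose n : ℚ) *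
    ((k : ℚ) - (2 * n + 1) + k * (2 * n + 1 - k) * (harmonicQ k - harmonicQ (n + k))) / (n + 1)

lemma wzCert_zero (n : ℕ) : wzCert n 0 = -((2 * n + 1).choose n : ℚ) := by
  have key : ((2 * n + 1).choose n : ℚ) * (n + 1) = (2 * n).choose n * (2 * n + 1) := by
    rw [← Nat.choose_symm_half]
    exact_mod_cast (Nat.add_one_mul_choose_eq (2 * n) n).symm.trans (mul_comm _ _)
  simp only [wzCert, add_zero, Nat.choose_zero_right, Nat.sub_zero, Nat.cast_zero, Nat.cast_one,
    zero_mul]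
  field_simp
  linear_combination key

lemma wzCert_succ_self (n : ℕ) : wzCert n (n + 1) = 0 := by
  rcases n with _ | n
  · simp [wzCert]
  · have : (2 * (n + 1) - (n + 1 + 1)).choose (n + 1) = 0 := Nat.choose_eq_zero_of_lt (by omega)
    simp [wzCert, this]

lemma wzCert_step_rational_identity {K : Type*} [Field K] {n k h A B : K} (hk : k + 1 ≠ 0)
    (hnk : n + k + 1 ≠ 0) (h2nk : 2 * n - k ≠ 0) (hn : n + 1 ≠ 0) :
    A * (n + k + 1) / (k + 1) * (B * (n - k) / (2 * n - k)) *
        (k + 1 - (2 * n + 1) + (k + 1) * (2 * n + 1 - (k + 1)) *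
          (h + 1 / (k + 1) - 1 / (n + k + 1))) / (n + 1)
      - A * B * (k - (2 * n + 1) + k * (2 * n + 1 - k) * h) / (n + 1)
      = A * B * (1 + (n - 2 * k) * h) := by
  -- `field_simp` rewrites `2 * n` to `n * 2` in the goal only
  have h2nk' : n * 2 - k ≠ 0 := by rwa [mul_comm]
  field_simp
  ring

lemma wzCert_succ_sub_wzCert_of_lt {n k : ℕ} (hk : k < n) :
    wzCert n (k + 1) - wzCert n k =
      ((n + k).choose k : ℚ) * ((2 * n - k).choose n : ℚ) *
        (1 + ((n : ℚ) - 2 * k) * (harmonicQ k - harmonicQ (n + k))) := by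
  have hA : ((n + k + 1).choose (k + 1) : ℚ) = _ := cast_choose_succ_succ_eq n k
  have hB : ((2 * n - k - 1).choose n : ℚ) = _ := cast_choose_sub_one_eq (by omega)
  rw [show 2 * n - k - 1 = 2 * n - (k + 1) by omega, Nat.cast_sub (by omega)] at hB
  have h2nk : (2 * n : ℚ) - k ≠ 0 := by
    have : (k : ℚ) < n := by exact_mod_cast hk
    linarith
  rw [← wzCert_step_rational_identity (by positivity) (by positivity) h2nk (by positivity)]
  simp only [wzCert, ← add_assoc, hA, hB, harmonicQ_succ]
  push_cast
  ring

lemma wzCert_succ_sub_wzCert {n k : ℕ} (hk : k ≤ n) :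
    wzCert n (k + 1) - wzCert n k =
      ((n + k).choose k : ℚ) * ((2 * n - k).choose n : ℚ) *
        (1 + ((n : ℚ) - 2 * k) * (harmonicQ k - harmonicQ (n + k))) := by
  rcases hk.lt_or_eq with hk | rfl
  · exact wzCert_succ_sub_wzCert_of_lt hk
  · rw [wzCert_succ_self, wzCert, show 2 * k - k = k by omega, Nat.choose_self]
    field_simp
    ring

theorem stmt14 (n : ℕ) :
    ∑ k ∈ range (n + 1), ((n + k).choose k : ℚ) * ((2 * n - k).choose n : ℚ) *
        (1 + ((n : ℚ) - 2 * k) * (harmonicQ k - harmonicQ (n + k)))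
      = ((2 * n + 1).choose n : ℚ) := by
  rw [← sum_congr rfl fun k hk => wzCert_succ_sub_wzCert (Nat.lt_succ_iff.mp (mem_range.mp hk)),
    sum_range_sub, wzCert_succ_self, wzCert_zero, zero_sub, neg_neg]
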